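/- The function σ(t) = arctanh(√(1 - e^{-t}))/√(1 - e^{-t}) satisfies ln(σ(t))/ln(t) → 1 as t → ∞; that is, the asymptotic spread dimension of the unit interval is 1. -/

import Mathlib

/-!
Writing `x = √(1 - e^{-t})`, we have `1 - x² = e^{-t}`, so
`arctanh x = log (1 + x) - ½ log (1 - x²) = log (1 + x) + t / 2`. Since `x → 1`, this gives
`σ(t) ~ t / 2`, and a function asymptotic to a positive multiple of `t` has `log σ(t) / log t → 1`.
-/

open Filter Real

/-- The inverse hyperbolic tangent, `arctanh x = (1/2)·ln((1+x)/(1-x))`. -/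
noncomputable def arctanh (x : ℝ) : ℝ := (1 / 2) * Real.log ((1 + x) / (1 - x))

open Topology

/-- For `t ≥ 0`, the scaled spread `σ(t)` of the unit interval. -/
noncomputable def unitIntervalSpread (t : ℝ) : ℝ :=
  arctanh (√(1 - exp (-t))) / √(1 - exp (-t))

theorem arctanh_eq_log_one_add_sub_half_log {x : ℝ} (hx₀ : -1 < x) (hx₁ : x < 1) :
    arctanh x = log (1 + x) - log (1 - x ^ 2) / 2 := by
  have hfrac : (1 + x) / (1 - x) = (1 + x) ^ 2 / (1 - x ^ 2) := by
    field_simp [show 1 - x ≠ 0 by linarith, show 1 - x ^ 2 ≠ 0 by nlinarith]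
    ring
  rw [arctanh, hfrac, log_div (pow_pos (by linarith) 2).ne' (by nlinarith), log_pow]
  ring

theorem arctanh_sqrt_one_sub_exp_neg {t : ℝ} (ht : 0 ≤ t) :
    arctanh (√(1 - exp (-t))) = log (1 + √(1 - exp (-t))) + t / 2 := by
  have hsq : √(1 - exp (-t)) ^ 2 = 1 - exp (-t) :=
    sq_sqrt (by linarith [exp_le_one_iff.mpr (neg_nonpos.mpr ht)])
  have hlt : √(1 - exp (-t)) < 1 := by
    nlinarith [exp_pos (-t), sqrt_nonneg (1 - exp (-t))]
  rw [arctanh_eq_log_one_add_sub_half_log (by linarith [sqrt_nonneg (1 - exp (-t))]) hlt, hsq,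
    sub_sub_cancel, log_exp]
  ring

theorem tendsto_sqrt_one_sub_exp_neg_atTop :
    Tendsto (fun t => √(1 - exp (-t))) atTop (𝓝 1) := by
  have h := ((tendsto_const_nhds (x := (1 : ℝ))).sub tendsto_exp_neg_atTop_nhds_zero).sqrt
  simpa using h

theorem tendsto_unitIntervalSpread_div_atTop :
    Tendsto (fun t => unitIntervalSpread t / t) atTop (𝓝 (1 / 2)) := by
  have hlog : Tendsto (fun t => log (1 + √(1 - exp (-t))) / t) atTop (𝓝 0) := by
    have h := ((tendsto_const_nhds (x := (1 : ℝ))).add tendsto_sqrt_one_sub_exp_neg_atTop).log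
      (by norm_num)
    exact h.div_atTop tendsto_id
  have hlim := (hlog.add_const (1 / 2)).div tendsto_sqrt_one_sub_exp_neg_atTop one_ne_zero
  rw [zero_add, div_one] at hlim
  refine hlim.congr' ?_
  filter_upwards [eventually_gt_atTop 0] with t ht
  rw [Pi.div_apply, unitIntervalSpread, arctanh_sqrt_one_sub_exp_neg ht.le]
  field_simp

theorem tendsto_log_div_log_of_tendsto_div {α : Type*} {l : Filter α} {f g : α → ℝ} {c : ℝ}
    (hc : 0 < c) (hg : Tendsto g l atTop) (hfg : Tendsto (fun a => f a / g a) l (𝓝 c)) :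
    Tendsto (fun a => log (f a) / log (g a)) l (𝓝 1) := by
  have hlog : Tendsto (fun a => log (f a / g a) / log (g a) + 1) l (𝓝 1) := by
    simpa using ((hfg.log hc.ne').div_atTop (tendsto_log_atTop.comp hg)).add_const 1
  refine hlog.congr' ?_
  filter_upwards [hfg.eventually (lt_mem_nhds hc), hg.eventually_gt_atTop 1] with a hpos hg1
  have hg0 : 0 < g a := by linarith
  have hf0 : 0 < f a := (div_pos_iff_of_pos_right hg0).mp hpos
  rw [log_div hf0.ne' hg0.ne', sub_div, div_self (log_pos hg1).ne', sub_add_cancel]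

/-- For `σ(t) = arctanh(√(1-e^{-t}))/√(1-e^{-t})`, the spread of the unit
interval, `ln(σ(t))/ln(t) → 1` as `t → ∞`: the asymptotic spread dimension of
the unit interval is `1`. -/
theorem spread_dimension_unit_interval :
    Tendsto (fun t : ℝ =>
        Real.log (arctanh (Real.sqrt (1 - Real.exp (-t))) / Real.sqrt (1 - Real.exp (-t)))
          / Real.log t) atTop (nhds 1) :=
  tendsto_log_div_log_of_tendsto_div one_half_pos tendsto_id tendsto_unitIntervalSpread_div_atTop
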